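/- Let S = NCS(1) be the noncommutative semigroup of order 3 with Cayley table (rows indexed by the left factor): e_1 e_1 = e_1 e_2 = e_1 e_3 = e_1; e_2 e_1 = e_1, e_2 e_2 = e_2, e_2 e_3 = e_1; e_3 e_1 = e_1, e_3 e_2 = e_3, e_3 e_3 = e_1. A k-linear operator P on k[S] is a Rota-Baxter operator of weight zero if and only if its matrix C_P belongs to one of the following families (parameters in k): (1) [[0,0,0],[0,0,0],[0,a,0]] with a arbitrary; (2) [[0,0,0],[0,0,0],[-a,a,0]] with a nonzero; (3) [[0,0,0],[b-a,-b,a],[b(b-a)/a, -b^2/a, b]] with a and b nonzero; (4) [[0,0,0],[-a,-b,a],[-b,-b^2/a,b]] with a nonzero and b arbitrary; (5) [[a,0,-a],[-b,0,b],[a,0,-a]] with a nonzero and b arbitrary. -/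

import Mathlib

/-!
Both sides of the Rota–Baxter identity are bilinear, so it suffices to check it on pairs of basis
elements, where it becomes the quadratic system
`∑_{ab = t} c_{ia} c_{jb} = ∑_b c_{jb} c_{ib,t} + ∑_a c_{ia} c_{aj,t}` in the entries of `C_P`.
In NCS(1) the element `e1` is a zero, and the equations with `i = j = e1` force the first row to be
`(a, 0, -a)`. For `a ≠ 0` the remaining equations give family (5); for `a = 0` they give
families (1)–(2) when `c23 = 0` and families (3)–(4) when `c23 ≠ 0`.
-/

namespace Stmt14

inductive S : Type
  | e1 | e2 | e3
  deriving DecidableEq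

instance instFintypeS : Fintype S :=
  ⟨{S.e1, S.e2, S.e3}, fun x => by cases x <;> decide⟩

open S

instance : Mul S := ⟨fun a b => match a, b with
  | e1, e1 => e1
  | e1, e2 => e1
  | e1, e3 => e1
  | e2, e1 => e1
  | e2, e2 => e2
  | e2, e3 => e1
  | e3, e1 => e1
  | e3, e2 => e3
  | e3, e3 => e1⟩

instance : Semigroup S := { mul_assoc := by decide }

/-- The 3×3 matrix (rows = first index) as a function `S → S → k`. -/
def mat3 {k : Type*} (a11 a12 a13 a21 a22 a23 a31 a32 a33 : k) : S → S → k :=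
  fun i j => match i, j with
  | e1, e1 => a11 | e1, e2 => a12 | e1, e3 => a13
  | e2, e1 => a21 | e2, e2 => a22 | e2, e3 => a23
  | e3, e1 => a31 | e3, e2 => a32 | e3, e3 => a33

end Stmt14

open MonoidAlgebra

section
variable {k G : Type*} [CommSemiring k] [Mul G]

theorem rotaBaxter_iff_on_basis (P : MonoidAlgebra k G →ₗ[k] MonoidAlgebra k G) :
    (∀ x y, P x * P y = P (x * P y) + P (P x * y)) ↔
      ∀ i j : G, P (single i 1) * P (single j 1) =
        P (single i 1 * P (single j 1)) + P (P (single i 1) * single j 1) := by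
  refine ⟨fun h i j => h _ _, fun h x y => ?_⟩
  let m := LinearMap.mul k (MonoidAlgebra k G)
  have hB : m.compl₁₂ P P = (m.compl₂ P).compr₂ P + (m.comp P).compr₂ P :=
    LinearMap.ext_basis (basis G k) (basis G k) fun i j => by simpa [m] using h i j
  simpa [m] using congr($hB x y)

end

section
variable {k G : Type*} [CommSemiring k] [Fintype G] [DecidableEq G]
  {P : MonoidAlgebra k G →ₗ[k] MonoidAlgebra k G} {C : G → G → k}

def IsRotaBaxterMatrix [Mul G] (C : G → G → k) : Prop :=
  ∀ i j t, (∑ a, ∑ b, if a * b = t then C i a * C j b else 0) =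
    ∑ b, C j b * C (i * b) t + ∑ a, C i a * C (a * j) t

variable (hC : ∀ i, P (single i 1) = ∑ j, single j (C i j))
include hC

theorem coeff_apply_single (i t : G) (r : k) : (P (single i r)).coeff t = r * C i t := by
  rw [← mul_one r, ← smul_single', map_smul, hC]
  simp [coeff_sum, coeff_single, Finsupp.single_apply]

variable [Mul G]

theorem coeff_apply_mul_apply (i j t : G) :
    (P (single i 1) * P (single j 1)).coeff t =
      ∑ a, ∑ b, if a * b = t then C i a * C j b else 0 := by
  simp only [hC, Finset.sum_mul_sum, single_mul_single, coeff_sum, coeff_single,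
    Finsupp.finsetSum_apply, Finsupp.single_apply]

theorem coeff_apply_single_mul_apply (i j t : G) :
    (P (single i 1 * P (single j 1))).coeff t = ∑ b, C j b * C (i * b) t := by
  simp [hC j, Finset.mul_sum, coeff_sum, coeff_apply_single hC]

theorem coeff_apply_apply_mul_single (i j t : G) :
    (P (P (single i 1) * single j 1)).coeff t = ∑ a, C i a * C (a * j) t := by
  simp [hC i, Finset.sum_mul, coeff_sum, coeff_apply_single hC]

theorem rotaBaxter_iff_isRotaBaxterMatrix :
    (∀ x y, P x * P y = P (x * P y) + P (P x * y)) ↔ IsRotaBaxterMatrix C := by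
  rw [rotaBaxter_iff_on_basis]
  simp only [MonoidAlgebra.ext_iff, Finsupp.ext_iff, coeff_add, Finsupp.add_apply,
    coeff_apply_mul_apply hC, coeff_apply_single_mul_apply hC, coeff_apply_apply_mul_single hC]
  rfl

end

namespace Stmt14

open S

@[simp] lemma e1_mul (x : S) : e1 * x = e1 := by cases x <;> rfl
@[simp] lemma mul_e1 (x : S) : x * e1 = e1 := by cases x <;> rfl
@[simp] lemma e2_mul_e2 : e2 * e2 = e2 := rfl
@[simp] lemma e2_mul_e3 : e2 * e3 = e1 := rfl
@[simp] lemma e3_mul_e2 : e3 * e2 = e3 := rfl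
@[simp] lemma e3_mul_e3 : e3 * e3 = e1 := rfl

lemma sum_S {M : Type*} [AddCommMonoid M] (f : S → M) : ∑ i, f i = f e1 + f e2 + f e3 := by
  have h : (Finset.univ : Finset S) = {e1, e2, e3} := rfl
  rw [h, Finset.sum_insert (by decide), Finset.sum_insert (by decide), Finset.sum_singleton,
    add_assoc]

lemma exists_eq_mat3 {k : Type*} (C : S → S → k) :
    ∃ c11 c12 c13 c21 c22 c23 c31 c32 c33, C = mat3 c11 c12 c13 c21 c22 c23 c31 c32 c33 :=
  ⟨_, _, _, _, _, _, _, _, _, funext fun i => funext fun j => by cases i <;> cases j <;> rfl⟩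

section CommRing
variable {k : Type*} [CommRing k] [NoZeroDivisors k] {c11 c12 c13 c21 c22 c23 c31 c32 c33 : k}

theorem row_one_of_isRotaBaxterMatrix
    (h : IsRotaBaxterMatrix (mat3 c11 c12 c13 c21 c22 c23 c31 c32 c33)) :
    c12 = 0 ∧ c13 = -c11 := by
  have E111 := h e1 e1 e1
  have E112 := h e1 e1 e2
  have E113 := h e1 e1 e3
  simp only [sum_S, mat3, e1_mul, mul_e1, e2_mul_e2, e2_mul_e3, e3_mul_e2, e3_mul_e3,
    reduceCtorEq, if_true, if_false, add_zero, zero_add] at E111 E112 E113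
  by_cases hu : 2 * c11 + c12 + 2 * c13 = 0
  · have h13 : c11 + c13 = 0 :=
      pow_eq_zero_iff two_ne_zero |>.mp (by linear_combination -E111 + c13 * hu)
    exact ⟨by linear_combination hu - 2 * h13, by linear_combination h13⟩
  · have h12 : c12 = 0 := (mul_eq_zero.mp (by linear_combination -E112)).resolve_right hu
    have h13 : c13 = 0 := (mul_eq_zero.mp (by linear_combination -E113)).resolve_right hu
    have h11 : c11 = 0 := pow_eq_zero_iff two_ne_zero |>.mp
      (by linear_combination -E111 + (c13 + c12) * h13)
    exact absurd (by rw [h11, h12, h13]; ring) hu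

theorem eq_of_isRotaBaxterMatrix_of_c11_ne_zero
    (h : IsRotaBaxterMatrix (mat3 c11 0 (-c11) c21 c22 c23 c31 c32 c33)) (h11 : c11 ≠ 0) :
    c22 = 0 ∧ c23 = -c21 ∧ c31 = c11 ∧ c32 = 0 ∧ c33 = -c11 := by
  have E121 := h e1 e2 e1
  have E122 := h e1 e2 e2
  have E131 := h e1 e3 e1
  have E211 := h e2 e1 e1
  have E222 := h e2 e2 e2
  simp only [sum_S, mat3, e1_mul, mul_e1, e2_mul_e2, e2_mul_e3, e3_mul_e2, e3_mul_e3,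
    reduceCtorEq, if_true, if_false, mul_zero, zero_mul, add_zero, zero_add]
    at E121 E122 E131 E211 E222
  have h32 : c32 = 0 := (mul_eq_zero.mp (by linear_combination E122)).resolve_left h11
  have h22 : c22 = 0 :=
    pow_eq_zero_iff two_ne_zero |>.mp (by linear_combination -E222 - c23 * h32)
  have hrow : c21 + c22 + c23 = 0 :=
    (mul_eq_zero.mp (by linear_combination -E211)).resolve_left h11
  have h31 : c31 - c11 = 0 :=
    (mul_eq_zero.mp (by linear_combination E121 + c11 * (hrow - h22))).resolve_left h11
  have h33 : c33 + c31 = 0 := (mul_eq_zero.mp (by linear_combination -E131)).resolve_left h11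
  exact ⟨h22, by linear_combination hrow - h22, by linear_combination h31, h32,
    by linear_combination h33 - h31⟩

theorem eq_of_isRotaBaxterMatrix_of_c23_eq_zero
    (h : IsRotaBaxterMatrix (mat3 0 0 0 c21 c22 0 c31 c32 c33)) :
    c21 = 0 ∧ c22 = 0 ∧ c33 = 0 ∧ c31 * (c31 + c32) = 0 := by
  have E221 := h e2 e2 e1
  have E222 := h e2 e2 e2
  have E323 := h e3 e2 e3
  have E331 := h e3 e3 e1
  simp only [sum_S, mat3, e1_mul, mul_e1, e2_mul_e2, e2_mul_e3, e3_mul_e2, e3_mul_e3,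
    reduceCtorEq, if_true, if_false, mul_zero, zero_mul, add_zero, zero_add]
    at E221 E222 E323 E331
  have h22 : c22 = 0 := pow_eq_zero_iff two_ne_zero |>.mp (by linear_combination -E222)
  have h21 : c21 = 0 := pow_eq_zero_iff two_ne_zero |>.mp (by linear_combination E221)
  have h33 : c33 = 0 := pow_eq_zero_iff two_ne_zero |>.mp (by linear_combination -E323)
  exact ⟨h21, h22, h33, by linear_combination E331 - (2 * c31 + c32 + c33) * h33⟩

end CommRing

section Field
variable {k : Type*} [Field k] {c21 c22 c23 c31 c32 c33 : k}

theorem eq_of_isRotaBaxterMatrix_of_c23_ne_zero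
    (h : IsRotaBaxterMatrix (mat3 0 0 0 c21 c22 c23 c31 c32 c33)) (h23 : c23 ≠ 0) :
    c22 = -c33 ∧ c32 = -(c33 ^ 2) / c23 ∧
      (c21 = c33 - c23 ∧ c31 = c33 * (c33 - c23) / c23 ∨ c21 = -c23 ∧ c31 = -c33) := by
  have E221 := h e2 e2 e1
  have E223 := h e2 e2 e3
  have E231 := h e2 e3 e1
  have E323 := h e3 e2 e3
  simp only [sum_S, mat3, e1_mul, mul_e1, e2_mul_e2, e2_mul_e3, e3_mul_e2, e3_mul_e3,
    reduceCtorEq, if_true, if_false, mul_zero, add_zero, zero_add] at E221 E223 E231 E323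
  have h22 : c22 + c33 = 0 := (mul_eq_zero.mp (by linear_combination -E223)).resolve_left h23
  refine ⟨by linear_combination h22, by rw [eq_div_iff h23]; linear_combination -E323, ?_⟩
  rcases mul_eq_zero.mp (show (c21 + c23 - c33) * (c31 + c33) = 0 by
    linear_combination E231 - (c31 + c33) * h22) with h21 | h31
  · refine .inl ⟨by linear_combination h21, ?_⟩
    rw [eq_div_iff h23]
    linear_combination -E221 + (c21 + c23 + c33) * h21 + c23 * h22
  · have h21 : c21 + c23 = 0 :=
      pow_eq_zero_iff two_ne_zero |>.mp (by linear_combination E221 - c23 * (h22 - h31))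
    exact .inr ⟨by linear_combination h21, by linear_combination h31⟩

def InRotaBaxterFamilies (C : S → S → k) : Prop :=
  (∃ a : k, C = mat3 0 0 0 0 0 0 0 a 0) ∨
  (∃ a : k, a ≠ 0 ∧ C = mat3 0 0 0 0 0 0 (-a) a 0) ∨
  (∃ a b : k, a ≠ 0 ∧ b ≠ 0 ∧ C = mat3 0 0 0 (b - a) (-b) a (b * (b - a) / a) (-(b ^ 2) / a) b) ∨
  (∃ a b : k, a ≠ 0 ∧ C = mat3 0 0 0 (-a) (-b) a (-b) (-(b ^ 2) / a) b) ∨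
  (∃ a b : k, a ≠ 0 ∧ C = mat3 a 0 (-a) (-b) 0 b a 0 (-a))

theorem inRotaBaxterFamilies_of_isRotaBaxterMatrix {c11 c12 c13 : k}
    (h : IsRotaBaxterMatrix (mat3 c11 c12 c13 c21 c22 c23 c31 c32 c33)) :
    InRotaBaxterFamilies (mat3 c11 c12 c13 c21 c22 c23 c31 c32 c33) := by
  obtain ⟨rfl, rfl⟩ := row_one_of_isRotaBaxterMatrix h
  obtain h11 | rfl := ne_or_eq c11 0
  · obtain ⟨h22, h23, h31, h32, h33⟩ := eq_of_isRotaBaxterMatrix_of_c11_ne_zero h h11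
    exact .inr <| .inr <| .inr <| .inr
      ⟨c11, -c21, h11, by rw [h22, h23, h31, h32, h33, neg_neg]⟩
  rw [neg_zero] at h ⊢
  obtain rfl | h23 := eq_or_ne c23 0
  · obtain ⟨rfl, rfl, rfl, h3⟩ := eq_of_isRotaBaxterMatrix_of_c23_eq_zero h
    obtain rfl | h31 := eq_or_ne c31 0
    · exact .inl ⟨c32, rfl⟩
    · obtain rfl : c31 = -c32 :=
        eq_neg_of_add_eq_zero_left ((mul_eq_zero.mp h3).resolve_left h31)
      exact .inr <| .inl ⟨c32, fun hc => h31 (by rw [hc, neg_zero]), rfl⟩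
  obtain ⟨rfl, rfl, ⟨rfl, rfl⟩ | ⟨rfl, rfl⟩⟩ := eq_of_isRotaBaxterMatrix_of_c23_ne_zero h h23
  · obtain rfl | h33 := eq_or_ne c33 0
    -- family (3) excludes `b = 0`; that matrix is the `b = 0` member of family (4)
    · exact .inr <| .inr <| .inr <| .inl ⟨c23, 0, h23, by simp⟩
    · exact .inr <| .inr <| .inl ⟨c23, c33, h23, h33, rfl⟩
  · exact .inr <| .inr <| .inr <| .inl ⟨c23, c33, h23, rfl⟩

theorem isRotaBaxterMatrix_of_inRotaBaxterFamilies {C : S → S → k} (h : InRotaBaxterFamilies C) :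
    IsRotaBaxterMatrix C := by
  rcases h with ⟨a, rfl⟩ | ⟨a, -, rfl⟩ | ⟨a, b, ha, -, rfl⟩ | ⟨a, b, ha, rfl⟩ | ⟨a, b, -, rfl⟩ <;>
    intro i j t <;> cases i <;> cases j <;> cases t <;>
    simp only [sum_S, mat3, e1_mul, mul_e1, e2_mul_e2, e2_mul_e3, e3_mul_e2, e3_mul_e3,
      reduceCtorEq, if_true, if_false, mul_zero, zero_mul, add_zero, zero_add] <;>
    first | ring1 | (field_simp; ring1)

theorem isRotaBaxterMatrix_iff_inRotaBaxterFamilies (C : S → S → k) :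
    IsRotaBaxterMatrix C ↔ InRotaBaxterFamilies C := by
  refine ⟨fun h => ?_, isRotaBaxterMatrix_of_inRotaBaxterFamilies⟩
  obtain ⟨c11, c12, c13, c21, c22, c23, c31, c32, c33, rfl⟩ := exists_eq_mat3 C
  exact inRotaBaxterFamilies_of_isRotaBaxterMatrix h

end Field

theorem rbo_NCS1_general {k : Type*} [Field k]
    (P : MonoidAlgebra k S →ₗ[k] MonoidAlgebra k S) (C : S → S → k)
    (hC : ∀ i, P (MonoidAlgebra.single i 1) = ∑ j, MonoidAlgebra.single j (C i j)) :
    (∀ x y, P x * P y = P (x * P y) + P (P x * y)) ↔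
      ((∃ a : k, C = mat3 0 0 0 0 0 0 0 a 0) ∨
      (∃ a : k, a ≠ 0 ∧ C = mat3 0 0 0 0 0 0 (-a) a 0) ∨
      (∃ a b : k, a ≠ 0 ∧ b ≠ 0 ∧ C = mat3 0 0 0 (b - a) (-b) a (b * (b - a) / a) (-(b ^ 2) / a) b) ∨
      (∃ a b : k, a ≠ 0 ∧ C = mat3 0 0 0 (-a) (-b) a (-b) (-(b ^ 2) / a) b) ∨
      (∃ a b : k, a ≠ 0 ∧ C = mat3 a 0 (-a) (-b) 0 b a 0 (-a))) :=
  (rotaBaxter_iff_isRotaBaxterMatrix hC).trans (isRotaBaxterMatrix_iff_inRotaBaxterFamilies C)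

theorem rbo_NCS1 {k : Type*} [Field k] [CharZero k]
    (P : MonoidAlgebra k S →ₗ[k] MonoidAlgebra k S) (C : S → S → k)
    (hC : ∀ i, P (MonoidAlgebra.single i 1) = ∑ j, MonoidAlgebra.single j (C i j)) :
    (∀ x y, P x * P y = P (x * P y) + P (P x * y)) ↔
      ((∃ a : k, C = mat3 0 0 0 0 0 0 0 a 0) ∨
      (∃ a : k, a ≠ 0 ∧ C = mat3 0 0 0 0 0 0 (-a) a 0) ∨
      (∃ a b : k, a ≠ 0 ∧ b ≠ 0 ∧ C = mat3 0 0 0 (b - a) (-b) a (b * (b - a) / a) (-(b ^ 2) / a) b) ∨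
      (∃ a b : k, a ≠ 0 ∧ C = mat3 0 0 0 (-a) (-b) a (-b) (-(b ^ 2) / a) b) ∨
      (∃ a b : k, a ≠ 0 ∧ C = mat3 a 0 (-a) (-b) 0 b a 0 (-a))) :=
  rbo_NCS1_general P C hC

end Stmt14
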